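/- arXiv:2510.00710 — 2 statements merged into one kernel-verified Lean document; each statement's English description precedes it below -/
import Mathlib

section
/- Let J : ℝ → ℝ be continuous, nonnegative with J(0) > 0, and let a, b ∈ L^∞_loc(ℝ). Suppose w ∈ C(ℝ) ∩ C¹(ℝ∖{0}) satisfies d·∫_{−∞}^0 J(x−y)·w(y) dy − d·w(x) + a(x)·w'(x) + b(x)·w(x) ≤ 0 for x < 0, w(x) ≥ 0 for x ≥ 0, and w ≥ 0, w ≢ 0 on (−∞,0). Then w(x) > 0 for all x < 0. -/
open MeasureTheory

theorem stmt16 (J w w' a b : ℝ → ℝ) (d : ℝ) (hd : 0 < d)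
    (hJc : Continuous J) (hJpos : ∀ x, 0 ≤ J x) (hJ0 : 0 < J 0)
    (hab : ∀ r > (0:ℝ), ∃ C, ∀ x ∈ Set.Icc (-r) r, |a x| ≤ C ∧ |b x| ≤ C)
    (hwc : Continuous w)
    (hwd : ∀ x ≠ (0:ℝ), HasDerivAt w (w' x) x)
    (hint : ∀ x < (0:ℝ), IntegrableOn (fun y => J (x - y) * w y) (Set.Iic 0))
    (hineq : ∀ x < (0:ℝ),
      d * (∫ y in Set.Iic (0:ℝ), J (x - y) * w y) - d * w x + a x * w' x + b x * w x ≤ 0)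
    (hpos : ∀ x ≥ (0:ℝ), 0 ≤ w x)
    (hnn : ∀ x < (0:ℝ), 0 ≤ w x)
    (hne : ∃ x < (0:ℝ), w x ≠ 0) :
    ∀ x < (0:ℝ), 0 < w x := by
  have hw0 : ∀ y, 0 ≤ w y := fun y => by
    rcases lt_or_ge y 0 with h | h
    · exact hnn y h
    · exact hpos y h
  obtain ⟨δ, hδ, hJδ⟩ : ∃ δ > 0, ∀ z : ℝ, |z| < δ → 0 < J z := by
    have hmem : {z | 0 < J z} ∈ nhds (0:ℝ) :=
      (isOpen_lt continuous_const hJc).mem_nhds hJ0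
    rcases Metric.mem_nhds_iff.1 hmem with ⟨δ, hδ, hball⟩
    exact ⟨δ, hδ, fun z hz => hball (by simpa [Real.dist_eq] using hz)⟩
  -- Key local step: if w vanishes at x₀ < 0, it vanishes on a neighborhood
  have key : ∀ x₀ < (0:ℝ), w x₀ = 0 →
      ∀ y ∈ Set.Ioo (x₀ - min δ (-x₀)) (x₀ + min δ (-x₀)), w y = 0 := by
    intro x₀ hx₀ hwx₀ y hy
    by_contra hwy
    have hwy' : 0 < w y := (hw0 y).lt_of_ne (Ne.symm hwy)
    have hd0 : w' x₀ = 0 := by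
      have hmin : IsLocalMin w x₀ :=
        Filter.Eventually.of_forall (fun z => by rw [hwx₀]; exact hw0 z)
      exact hmin.hasDerivAt_eq_zero (hwd x₀ (ne_of_lt hx₀))
    have hI0 : (∫ z in Set.Iic (0:ℝ), J (x₀ - z) * w z) = 0 := by
      have h1 := hineq x₀ hx₀
      rw [hwx₀, hd0] at h1
      have h2 : (∫ z in Set.Iic (0:ℝ), J (x₀ - z) * w z) ≤ 0 := by nlinarith
      have h3 : 0 ≤ (∫ z in Set.Iic (0:ℝ), J (x₀ - z) * w z) :=
        setIntegral_nonneg measurableSet_Iic (fun z _ => mul_nonneg (hJpos _) (hw0 z))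
      linarith
    set δ' := min δ (-x₀) with hδ'def
    have hδ'δ : δ' ≤ δ := min_le_left _ _
    have hδ'x : δ' ≤ -x₀ := min_le_right _ _
    have hopen : IsOpen ({z | 0 < w z} ∩ Set.Ioo (x₀ - δ') (x₀ + δ')) :=
      (isOpen_lt continuous_const hwc).inter isOpen_Ioo
    have hmem : ({z | 0 < w z} ∩ Set.Ioo (x₀ - δ') (x₀ + δ')) ∈ nhds y :=
      hopen.mem_nhds ⟨hwy', hy⟩
    rcases Metric.mem_nhds_iff.1 hmem with ⟨ε, hε, hball⟩
    set u := y - ε/2 with hu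
    set v := y + ε/2 with hv
    have huv : u < v := by simp [hu, hv]; linarith
    have hsub : Set.Icc u v ⊆ {z | 0 < w z} ∩ Set.Ioo (x₀ - δ') (x₀ + δ') := by
      intro z hz
      apply hball
      rw [Metric.mem_ball, Real.dist_eq, abs_lt]
      constructor
      · have := hz.1; simp only [hu] at this; linarith
      · have := hz.2; simp only [hv] at this; linarith
    have fcont : Continuous (fun z => J (x₀ - z) * w z) :=
      (hJc.comp (continuous_const.sub continuous_id)).mul hwc
    have hposI : 0 < ∫ z in u..v, J (x₀ - z) * w z := by
      apply intervalIntegral.intervalIntegral_pos_of_pos_on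
        (fcont.intervalIntegrable u v)
      · intro z hz
        have hz' := hsub ⟨le_of_lt hz.1, le_of_lt hz.2⟩
        have hJz : 0 < J (x₀ - z) := by
          apply hJδ
          rw [abs_lt]
          have h1 := hz'.2.1
          have h2 := hz'.2.2
          constructor <;> linarith
        exact mul_pos hJz hz'.1
      · exact huv
    have hle : (∫ z in Set.Ioc u v, J (x₀ - z) * w z)
        ≤ ∫ z in Set.Iic (0:ℝ), J (x₀ - z) * w z := by
      apply setIntegral_mono_set (hint x₀ hx₀)
      · exact Filter.Eventually.of_forall (fun z => mul_nonneg (hJpos _) (hw0 z))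
      · apply HasSubset.Subset.eventuallyLE
        intro z hz
        have hz' := hsub ⟨le_of_lt hz.1, hz.2⟩
        have : z < 0 := lt_of_lt_of_le hz'.2.2 (by linarith)
        exact le_of_lt this
    rw [intervalIntegral.integral_of_le (le_of_lt huv)] at hposI
    linarith
  -- connectedness argument
  intro x hx
  by_contra hwx
  have hwx0 : w x = 0 := le_antisymm (not_lt.1 hwx) (hw0 x)
  set S := {z : ℝ | z < 0 ∧ w z = 0} with hSdef
  have hSopen : IsOpen S := by
    rw [isOpen_iff_forall_mem_open]
    rintro z ⟨hz, hwz⟩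
    refine ⟨Set.Ioo (z - min δ (-z)) (z + min δ (-z)), ?_, isOpen_Ioo, ?_⟩
    · intro t ht
      have h0 : t < 0 := by
        have h1 := ht.2
        have h2 : min δ (-z) ≤ -z := min_le_right _ _
        linarith
      exact ⟨h0, key z hz hwz t ht⟩
    · have hm : 0 < min δ (-z) := lt_min hδ (by linarith)
      constructor <;> linarith
  have hVopen : IsOpen {z : ℝ | w z ≠ 0} :=
    isOpen_compl_iff.2 (isClosed_eq hwc continuous_const)
  obtain ⟨x₁, hx₁, hwx₁⟩ := hne
  have hpre : IsPreconnected (Set.Iio (0:ℝ)) := isPreconnected_Iio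
  have hres := hpre S {z | w z ≠ 0} hSopen hVopen
    (fun z hz => by
      by_cases h : w z = 0
      · exact Or.inl ⟨hz, h⟩
      · exact Or.inr h)
    ⟨x, hx, hx, hwx0⟩ ⟨x₁, hx₁, hwx₁⟩
  rcases hres with ⟨z, _, hzS, hzV⟩
  exact hzV hzS.2
end

section
/- Let J be continuous, nonnegative, bounded with ∫_ℝ J = 1, let d > 0, f'(0) ∈ ℝ, and for a bounded interval (−l,l) let λ_l be a real number admitting a strictly positive continuous eigenfunction φ_l on [−l,l] satisfying d·∫_{−l}^{l} J(x−y)·φ_l(y) dy − d·φ_l(x) + f'(0)·φ_l(x) = λ_l·φ_l(x) for all x ∈ [−l,l]. Then |λ_l − f'(0) + d| ≤ 2·l·d·‖J‖_∞. In particular λ_l → f'(0) − d as l → 0⁺. -/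
/-!
At a maximum point `x₀` of `φ_l` on `[-l, l]` the eigenvalue equation reads
`(λ_l - f'(0) + d) φ_l(x₀) = d ∫_{-l}^{l} J(x₀ - y) φ_l(y) dy`. The integral is nonnegative and,
since `φ_l(y) ≤ φ_l(x₀)`, at most `2l ‖J‖_∞ φ_l(x₀)`; dividing by `φ_l(x₀) > 0` gives
`0 ≤ λ_l - f'(0) + d ≤ 2 l d ‖J‖_∞`.
-/

open MeasureTheory Filter Set Topology

theorem setIntegral_mul_le_measureReal_mul {α : Type*} [MeasurableSpace α] {μ : Measure α}
    {s : Set α} (hs : MeasurableSet s) (hμs : μ s ≠ ⊤) {K φ : α → ℝ} {M c : ℝ}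
    (hK₀ : ∀ y, 0 ≤ K y) (hKM : ∀ y, K y ≤ M) (hφ₀ : ∀ y ∈ s, 0 ≤ φ y)
    (hφc : ∀ y ∈ s, φ y ≤ c) :
    ∫ y in s, K y * φ y ∂μ ≤ μ.real s * (M * c) := by
  calc ∫ y in s, K y * φ y ∂μ ≤ ∫ _ in s, M * c ∂μ :=
        integral_mono_of_nonneg
          (ae_restrict_of_forall_mem hs fun y hy => mul_nonneg (hK₀ y) (hφ₀ y hy))
          (integrableOn_const hμs)
          (ae_restrict_of_forall_mem hs fun y hy =>
            mul_le_mul (hKM y) (hφc y hy) (hφ₀ y hy) ((hK₀ y).trans (hKM y)))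
    _ = μ.real s * (M * c) := by rw [setIntegral_const, smul_eq_mul]

theorem abs_eigenvalue_sub_le_of_kernel_bound {J φ : ℝ → ℝ} {d f0 lam l M : ℝ} (hd : 0 ≤ d)
    (hl : 0 ≤ l) (hJ₀ : ∀ x, 0 ≤ J x) (hJM : ∀ x, J x ≤ M)
    (hφc : ContinuousOn φ (Icc (-l) l)) (hφpos : ∀ x ∈ Icc (-l) l, 0 < φ x)
    (heig : ∀ x ∈ Icc (-l) l,
      d * (∫ y in Icc (-l) l, J (x - y) * φ y) - d * φ x + f0 * φ x = lam * φ x) :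
    |lam - f0 + d| ≤ 2 * l * d * M := by
  obtain ⟨x₀, hx₀, hmax⟩ :=
    isCompact_Icc.exists_isMaxOn (nonempty_Icc.mpr (by linarith)) hφc
  set I := ∫ y in Icc (-l) l, J (x₀ - y) * φ y
  have hφx₀ : 0 < φ x₀ := hφpos x₀ hx₀
  have hshift : (lam - f0 + d) * φ x₀ = d * I := by linarith [heig x₀ hx₀]
  have hI₀ : 0 ≤ I :=
    setIntegral_nonneg measurableSet_Icc fun y hy => mul_nonneg (hJ₀ _) (hφpos y hy).le
  have hI : I ≤ 2 * l * (M * φ x₀) := by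
    have := setIntegral_mul_le_measureReal_mul (μ := volume) measurableSet_Icc
      measure_Icc_lt_top.ne
      (fun y => hJ₀ (x₀ - y)) (fun y => hJM (x₀ - y)) (fun y hy => (hφpos y hy).le)
      (fun y hy => hmax hy)
    rwa [Real.volume_real_Icc_of_le (by linarith), sub_neg_eq_add, ← two_mul] at this
  have hlower : 0 ≤ lam - f0 + d :=
    nonneg_of_mul_nonneg_left (hshift ▸ mul_nonneg hd hI₀) hφx₀
  have hupper : (lam - f0 + d) * φ x₀ ≤ (2 * l * d * M) * φ x₀ :=
    calc (lam - f0 + d) * φ x₀ = d * I := hshift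
      _ ≤ d * (2 * l * (M * φ x₀)) := mul_le_mul_of_nonneg_left hI hd
      _ = (2 * l * d * M) * φ x₀ := by ring
  rw [abs_of_nonneg hlower]
  exact le_of_mul_le_mul_right hupper hφx₀

theorem tendsto_nhdsGT_zero_of_abs_sub_le_mul {g : ℝ → ℝ} {c C : ℝ}
    (h : ∀ l > (0 : ℝ), |g l - c| ≤ C * l) : Tendsto g (𝓝[>] 0) (𝓝 c) := by
  rw [tendsto_iff_dist_tendsto_zero]
  have hlin : Tendsto (fun l : ℝ => C * l) (𝓝[>] 0) (𝓝 0) := by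
    simpa using ((continuous_const_mul C).tendsto 0).mono_left nhdsWithin_le_nhds
  refine squeeze_zero' (Eventually.of_forall fun l => dist_nonneg) ?_ hlin
  filter_upwards [self_mem_nhdsWithin] with l hl
  exact h l hl

theorem stmt18_general (J : ℝ → ℝ) (d f0 : ℝ) (hd : 0 < d)
    (hJpos : ∀ x, 0 ≤ J x) (hJbdd : BddAbove (Set.range J))
    (lam : ℝ → ℝ) (φ : ℝ → ℝ → ℝ)
    (hφc : ∀ l > (0:ℝ), ContinuousOn (φ l) (Set.Icc (-l) l))
    (hφpos : ∀ l > (0:ℝ), ∀ x ∈ Set.Icc (-l) l, 0 < φ l x)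
    (heig : ∀ l > (0:ℝ), ∀ x ∈ Set.Icc (-l) l,
      d * (∫ y in Set.Icc (-l) l, J (x - y) * φ l y) - d * φ l x + f0 * φ l x
        = lam l * φ l x) :
    (∀ l > (0:ℝ), |lam l - f0 + d| ≤ 2 * l * d * (⨆ x, J x)) ∧
    Filter.Tendsto lam (nhdsWithin 0 (Set.Ioi 0)) (nhds (f0 - d)) := by
  have hbound : ∀ l > (0:ℝ), |lam l - f0 + d| ≤ 2 * l * d * (⨆ x, J x) := fun l hl =>
    abs_eigenvalue_sub_le_of_kernel_bound hd.le hl.le hJpos (le_ciSup hJbdd)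
      (hφc l hl) (hφpos l hl) (heig l hl)
  refine ⟨hbound, tendsto_nhdsGT_zero_of_abs_sub_le_mul (C := 2 * d * ⨆ x, J x) fun l hl => ?_⟩
  calc |lam l - (f0 - d)| = |lam l - f0 + d| := by rw [sub_sub_eq_add_sub, add_sub_right_comm]
    _ ≤ 2 * l * d * (⨆ x, J x) := hbound l hl
    _ = 2 * d * (⨆ x, J x) * l := by ring

theorem stmt18 (J : ℝ → ℝ) (d f0 : ℝ) (hd : 0 < d)
    (hJc : Continuous J) (hJpos : ∀ x, 0 ≤ J x) (hJbdd : BddAbove (Set.range J))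
    (hJint : Integrable J) (hJ1 : (∫ x, J x) = 1)
    (lam : ℝ → ℝ) (φ : ℝ → ℝ → ℝ)
    (hφc : ∀ l > (0:ℝ), ContinuousOn (φ l) (Set.Icc (-l) l))
    (hφpos : ∀ l > (0:ℝ), ∀ x ∈ Set.Icc (-l) l, 0 < φ l x)
    (heig : ∀ l > (0:ℝ), ∀ x ∈ Set.Icc (-l) l,
      d * (∫ y in Set.Icc (-l) l, J (x - y) * φ l y) - d * φ l x + f0 * φ l x
        = lam l * φ l x) :
    (∀ l > (0:ℝ), |lam l - f0 + d| ≤ 2 * l * d * (⨆ x, J x)) ∧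
    Filter.Tendsto lam (nhdsWithin 0 (Set.Ioi 0)) (nhds (f0 - d)) :=
  stmt18_general J d f0 hd hJpos hJbdd lam φ hφc hφpos heig
end
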